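/- For every s > 0, 1/(s + K_{n=1}^∞ (n²/s)) = ∫_0^∞ e^{−sx}/cosh x dx, where s + K_{n=1}^∞ (n²/s) denotes the limit of the convergents of the generalized continued fraction with integer part s, partial numerators a_n = n² and partial denominators b_n = s. -/

import Mathlib

open Filter Real

/-- Numerators of the convergents of a generalized continued fraction with
integer part `b₀`, partial numerators `a n` and partial denominators `b n` (for `n ≥ 1`). -/
noncomputable def cfNum (b₀ : ℝ) (a b : ℕ → ℝ) : ℕ → ℝ
  | 0 => b₀
  | 1 => b 1 * b₀ + a 1
  | n + 2 => b (n + 2) * cfNum b₀ a b (n + 1) + a (n + 2) * cfNum b₀ a b n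

/-- Denominators of the convergents of a generalized continued fraction. -/
noncomputable def cfDen (a b : ℕ → ℝ) : ℕ → ℝ
  | 0 => 1
  | 1 => b 1
  | n + 2 => b (n + 2) * cfDen a b (n + 1) + a (n + 2) * cfDen a b n

/-- `IsCFLimit b₀ a b L` means: the convergents of the generalized continued fraction
`b₀ + a 1 / (b 1 + a 2 / (b 2 + ⋯))` tend to `L`. -/
def IsCFLimit (b₀ : ℝ) (a b : ℕ → ℝ) (L : ℝ) : Prop :=
  Filter.Tendsto (fun n => cfNum b₀ a b n / cfDen a b n) Filter.atTop (nhds L)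

/-!
Write `I n = ∫₀^∞ e^{-sx} tanhⁿ x sech x dx`, so that `I 0` is the integral on the right.
Integrating the derivative of `e^{-sx} sinhⁿ x / coshⁿ⁺¹ x` over `(0, ∞)` gives
`s I 0 + I 1 = 1` and `s I (n+1) = (n+1) I n - (n+2) I (n+2)`. For every solution `X` of the
convergent recurrence `X (n+2) = s X (n+1) + (n+2)² X n`, the pairing
`X (n+1) I (n+1) + (n+2) I (n+2) X n` is multiplied by `n+2` at each step, so it equals `(n+1)!`
for the numerators and `(n+1)! I 0` for the denominators. Thus `1 / I 0` is a mediant of two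
consecutive convergents with positive weights, hence lies between them, and in the limit
`1 / I 0 = L`.
-/

open MeasureTheory Set Nat

noncomputable def tanhMomentIntegrand (s : ℝ) (n : ℕ) (x : ℝ) : ℝ :=
  exp (-s * x) * sinh x ^ n / cosh x ^ (n + 1)

noncomputable def tanhMoment (s : ℝ) (n : ℕ) : ℝ :=
  ∫ x in Ioi (0 : ℝ), tanhMomentIntegrand s n x

section Integrand

variable (s : ℝ) (n : ℕ)

theorem continuous_tanhMomentIntegrand : Continuous (tanhMomentIntegrand s n) := by
  unfold tanhMomentIntegrand
  fun_prop (disch := intro x; positivity)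

variable {s n} {x : ℝ}

theorem tanhMomentIntegrand_nonneg (hx : 0 ≤ x) : 0 ≤ tanhMomentIntegrand s n x := by
  have := sinh_nonneg_iff.2 hx
  unfold tanhMomentIntegrand
  positivity

theorem tanhMomentIntegrand_le_exp (hx : 0 ≤ x) : tanhMomentIntegrand s n x ≤ exp (-s * x) := by
  have hsinh : sinh x ^ n ≤ cosh x ^ (n + 1) :=
    calc sinh x ^ n ≤ cosh x ^ n := pow_le_pow_left₀ (sinh_nonneg_iff.2 hx) (sinh_lt_cosh x).le n
      _ ≤ cosh x ^ (n + 1) := pow_le_pow_right₀ (one_le_cosh x) n.le_succ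
  rw [tanhMomentIntegrand, mul_div_assoc]
  exact mul_le_of_le_one_right (exp_pos _).le (div_le_one_of_le₀ hsinh (by positivity))

theorem integrableOn_tanhMomentIntegrand (hs : 0 < s) :
    IntegrableOn (tanhMomentIntegrand s n) (Ioi 0) := by
  refine (exp_neg_integrableOn_Ioi 0 hs).mono'
    (continuous_tanhMomentIntegrand s n).aestronglyMeasurable.restrict ?_
  filter_upwards [ae_restrict_mem measurableSet_Ioi] with x hx
  rw [norm_of_nonneg (tanhMomentIntegrand_nonneg hx.le)]
  exact tanhMomentIntegrand_le_exp hx.le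

theorem tendsto_tanhMomentIntegrand_atTop (hs : 0 < s) :
    Tendsto (tanhMomentIntegrand s n) atTop (nhds 0) := by
  have hexp : Tendsto (fun x => exp (-s * x)) atTop (nhds 0) := by
    refine (tendsto_exp_neg_atTop_nhds_zero.comp (tendsto_id.const_mul_atTop hs)).congr fun x => ?_
    simp [neg_mul]
  exact squeeze_zero' (eventually_ge_atTop 0 |>.mono fun x hx => tanhMomentIntegrand_nonneg hx)
    (eventually_ge_atTop 0 |>.mono fun x hx => tanhMomentIntegrand_le_exp hx) hexp

variable (s n x)

theorem hasDerivAt_tanhMomentIntegrand :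
    HasDerivAt (tanhMomentIntegrand s n)
      (-s * tanhMomentIntegrand s n x + n * tanhMomentIntegrand s (n - 1) x
        - (n + 1) * tanhMomentIntegrand s (n + 1) x) x := by
  have hexp : HasDerivAt (fun x => exp (-s * x)) (exp (-s * x) * -s) x := by
    simpa using ((hasDerivAt_id x).const_mul (-s)).exp
  have hcosh : HasDerivAt (fun x => cosh x ^ (n + 1)) ((n + 1) * cosh x ^ n * sinh x) x := by
    simpa using (hasDerivAt_cosh x).fun_pow (n + 1)
  refine ((hexp.mul ((hasDerivAt_sinh x).pow n)).div hcosh (by positivity)).congr_deriv ?_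
  have hcosh_ne := (cosh_pos x).ne'
  simp only [tanhMomentIntegrand, Pi.mul_apply, Pi.pow_apply]
  rcases n with _ | n
  · field_simp
    ring
  · simp only [Nat.add_sub_cancel]
    push_cast
    field_simp
    ring

end Integrand

section Moments

variable {s : ℝ}

theorem tanhMoment_pos (hs : 0 < s) (n : ℕ) : 0 < tanhMoment s n := by
  rw [tanhMoment, setIntegral_pos_iff_support_of_nonneg_ae
    (ae_restrict_of_forall_mem measurableSet_Ioi fun _ hx => tanhMomentIntegrand_nonneg hx.le)
    (integrableOn_tanhMomentIntegrand hs)]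
  have hsupp : Ioi 0 ⊆ Function.support (tanhMomentIntegrand s n) ∩ Ioi 0 := fun x hx => by
    have := sinh_pos_iff.2 hx
    exact ⟨(by unfold tanhMomentIntegrand; positivity : 0 < tanhMomentIntegrand s n x).ne', hx⟩
  exact (measure_mono hsupp).trans_lt' (by simp)

theorem tanhMoment_integration_by_parts (hs : 0 < s) (n : ℕ) :
    -s * tanhMoment s n + n * tanhMoment s (n - 1) - (n + 1) * tanhMoment s (n + 1)
      = -tanhMomentIntegrand s n 0 := by
  have hint (c : ℝ) (k : ℕ) :
      IntegrableOn (fun x => c * tanhMomentIntegrand s k x) (Ioi 0) :=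
    (integrableOn_tanhMomentIntegrand hs).const_mul c
  have hint₂ : IntegrableOn
      (fun x => -s * tanhMomentIntegrand s n x + n * tanhMomentIntegrand s (n - 1) x) (Ioi 0) :=
    (hint _ _).add (hint _ _)
  have hparts := integral_Ioi_of_hasDerivAt_of_tendsto
    (continuous_tanhMomentIntegrand s n).continuousWithinAt
    (fun x _ => hasDerivAt_tanhMomentIntegrand s n x) (hint₂.sub (hint _ _))
    (tendsto_tanhMomentIntegrand_atTop hs)
  rw [integral_sub hint₂ (hint _ _), integral_add (hint _ _) (hint _ _), integral_const_mul,
    integral_const_mul, integral_const_mul, zero_sub] at hparts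
  exact hparts

theorem tanhMoment_zero_recurrence (hs : 0 < s) : s * tanhMoment s 0 + tanhMoment s 1 = 1 := by
  have h := tanhMoment_integration_by_parts hs 0
  norm_num [tanhMomentIntegrand] at h
  linear_combination -h

theorem tanhMoment_succ_recurrence (hs : 0 < s) (n : ℕ) :
    s * tanhMoment s (n + 1) = (n + 1) * tanhMoment s n - (n + 2) * tanhMoment s (n + 2) := by
  have h := tanhMoment_integration_by_parts hs (n + 1)
  norm_num [tanhMomentIntegrand] at h
  linear_combination -h

theorem tanhMoment_zero_eq (s : ℝ) :
    tanhMoment s 0 = ∫ x in Ioi (0 : ℝ), exp (-s * x) / cosh x := by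
  simp [tanhMoment, tanhMomentIntegrand]

end Moments

theorem cfDen_pos {a b : ℕ → ℝ} (ha : ∀ n, 0 ≤ a n) (hb : ∀ n, 0 < b n) (n : ℕ) :
    0 < cfDen a b n := by
  induction n using Nat.twoStepInduction with
  | zero => exact one_pos
  | one => exact hb 1
  | more n hn hn₁ => exact add_pos_of_pos_of_nonneg (mul_pos (hb _) hn₁) (mul_nonneg (ha _) hn.le)

theorem add_div_add_mem_uIcc {a b c d : ℝ} (hb : 0 < b) (hd : 0 < d) :
    (a + c) / (b + d) ∈ uIcc (a / b) (c / d) := by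
  rcases le_total (a / b) (c / d) with h | h
  · rw [uIcc_of_le h]
    rw [div_le_div_iff₀ hb hd] at h
    constructor <;> rw [div_le_div_iff₀ (by positivity) (by positivity)] <;> nlinarith
  · rw [uIcc_of_ge h]
    rw [div_le_div_iff₀ hd hb] at h
    constructor <;> rw [div_le_div_iff₀ (by positivity) (by positivity)] <;> nlinarith

theorem eq_of_tendsto_of_forall_mem_uIcc {u : ℕ → ℝ} {x L : ℝ} (hu : Tendsto u atTop (nhds L))
    (hx : ∀ n, x ∈ uIcc (u n) (u (n + 1))) : x = L := by
  have hu₁ : Tendsto (fun n => u (n + 1)) atTop (nhds L) := hu.comp (tendsto_add_atTop_nat 1)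
  have hmin : Tendsto (fun n => min (u n) (u (n + 1))) atTop (nhds L) := by
    simpa using hu.min hu₁
  have hmax : Tendsto (fun n => max (u n) (u (n + 1))) atTop (nhds L) := by
    simpa using hu.max hu₁
  exact tendsto_nhds_unique tendsto_const_nhds
    (tendsto_of_tendsto_of_tendsto_of_le_of_le hmin hmax (fun n => (hx n).1) fun n => (hx n).2)

def momentPairing (I X : ℕ → ℝ) (n : ℕ) : ℝ := X (n + 1) * I (n + 1) + (n + 2) * I (n + 2) * X n

section Pairing

variable {s : ℝ} {I X : ℕ → ℝ}

theorem momentPairing_succ (hI : ∀ n : ℕ, s * I (n + 1) = (n + 1) * I n - (n + 2) * I (n + 2))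
    (hX : ∀ n : ℕ, X (n + 2) = s * X (n + 1) + ((n + 2 : ℕ) : ℝ) ^ 2 * X n) (n : ℕ) :
    momentPairing I X (n + 1) = (n + 2) * momentPairing I X n := by
  have h := hI (n + 1)
  rw [momentPairing, momentPairing, hX n]
  push_cast at h ⊢
  linear_combination X (n + 1) * h

theorem momentPairing_eq_factorial_mul
    (hI : ∀ n : ℕ, s * I (n + 1) = (n + 1) * I n - (n + 2) * I (n + 2))
    (hX : ∀ n : ℕ, X (n + 2) = s * X (n + 1) + ((n + 2 : ℕ) : ℝ) ^ 2 * X n) (n : ℕ) :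
    momentPairing I X n = (n + 1)! * momentPairing I X 0 := by
  induction n with
  | zero => simp
  | succ n ih =>
    rw [momentPairing_succ hI hX, ih, Nat.factorial_succ (n + 1)]
    push_cast
    ring

theorem momentPairing_div_mem_uIcc {Y : ℕ → ℝ} (hI : ∀ n, 0 < I n) (hY : ∀ n, 0 < Y n) (n : ℕ) :
    momentPairing I X n / momentPairing I Y n ∈ uIcc (X n / Y n) (X (n + 1) / Y (n + 1)) := by
  have hI₁ := hI (n + 1)
  have hI₂ := hI (n + 2)
  have hY₀ := hY n
  have hY₁ := hY (n + 1)
  have h := add_div_add_mem_uIcc (a := X (n + 1) * I (n + 1)) (c := (n + 2) * I (n + 2) * X n)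
    (by positivity : 0 < Y (n + 1) * I (n + 1)) (by positivity : 0 < (n + 2) * I (n + 2) * Y n)
  rwa [mul_div_mul_right _ _ hI₁.ne', mul_div_mul_left _ _ (by positivity), uIcc_comm] at h

theorem momentPairing_cfNum_zero
    (hI : ∀ n : ℕ, s * I (n + 1) = (n + 1) * I n - (n + 2) * I (n + 2))
    (hI₀ : s * I 0 + I 1 = 1) :
    momentPairing I (cfNum s (fun n => (n : ℝ) ^ 2) (fun _ => s)) 0 = 1 := by
  have h := hI 0
  simp only [momentPairing, cfNum]
  push_cast at h ⊢
  linear_combination hI₀ + s * h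

theorem momentPairing_cfDen_zero
    (hI : ∀ n : ℕ, s * I (n + 1) = (n + 1) * I n - (n + 2) * I (n + 2)) :
    momentPairing I (cfDen (fun n => (n : ℝ) ^ 2) (fun _ => s)) 0 = I 0 := by
  have h := hI 0
  simp only [momentPairing, cfDen]
  push_cast at h ⊢
  linear_combination h

end Pairing

theorem euler_integral_formula_exp (s : ℝ) (hs : 0 < s) (L : ℝ)
    (hL : IsCFLimit s (fun n => (n : ℝ) ^ 2) (fun _ => s) L) :
    1 / L = ∫ x in Set.Ioi (0 : ℝ), Real.exp (-s * x) / Real.cosh x := by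
  set P := cfNum s (fun n => (n : ℝ) ^ 2) (fun _ => s)
  set Q := cfDen (fun n => (n : ℝ) ^ 2) (fun _ => s)
  have hI := tanhMoment_succ_recurrence hs
  have hP n : momentPairing (tanhMoment s) P n = (n + 1)! := by
    rw [momentPairing_eq_factorial_mul hI (fun _ => rfl),
      momentPairing_cfNum_zero hI (tanhMoment_zero_recurrence hs), mul_one]
  have hQ n : momentPairing (tanhMoment s) Q n = (n + 1)! * tanhMoment s 0 := by
    rw [momentPairing_eq_factorial_mul hI (fun _ => rfl), momentPairing_cfDen_zero hI]
  have hmem n : 1 / tanhMoment s 0 ∈ uIcc (P n / Q n) (P (n + 1) / Q (n + 1)) := by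
    have h := momentPairing_div_mem_uIcc (X := P) (Y := Q) (tanhMoment_pos hs)
      (cfDen_pos (fun n => sq_nonneg (n : ℝ)) fun _ => hs) n
    rwa [hP, hQ, div_mul_cancel_left₀ (by positivity), ← one_div] at h
  rw [← tanhMoment_zero_eq, ← eq_of_tendsto_of_forall_mem_uIcc hL hmem, one_div_one_div]
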